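/- Let T_1, T_2 be one-column tableaux (k-subsets of [n]) that are noncrossing and not weakly separated. Then for any pair of one-column tableaux S_1, S_2 with S_1 ∪ S_2 = T_1 ∪ T_2 (equal row-wise multiset unions), the pair S_1, S_2 is not weakly separated. -/

import Mathlib

/-!
Write `m r ≤ M r` for the two entries of row `r` of `T1 ∪ T2` and cut the rows into blocks
wherever `M e < m (e + 1)`. Values in different blocks are ordered like the blocks, every block
meeting `T1 Δ T2` meets both `T1 \ T2` and `T2 \ T1`, and a strictly increasing choice of one
entry per row that takes `M r` at some row of a block keeps doing so for the rest of the block.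
Hence on the rows of a block where `T1` and `T2` differ, `S1` copies either `T1` throughout or
`T2` throughout.

If no element of `S1 \ S2` lay between two elements of `S2 \ S1`, there could be at most two
blocks meeting `T1 Δ T2`, and two blocks treated alike would make `T1, T2` weakly separated.
In the remaining case, two blocks with one flipped, `T1 \ T2` precedes `T2 \ T1` inside both
blocks (or vice versa). The last differing row `c` of the first block and the first differing
row `c'` of the second then satisfy `t_c < u_c < t_c' < u_c'` with equal rows in between, which
the noncrossing condition forbids on the interval `[c, c']`.
-/

open Finset

/-- `allLT I J` means `max I < min J` (vacuously true if either set is empty). -/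
def allLT (I J : Finset ℕ) : Prop := ∀ i ∈ I, ∀ j ∈ J, i < j

/-- `I` and `J` are weakly separated. -/
def WeaklySeparated (I J : Finset ℕ) : Prop :=
  (∃ I1 I2 : Finset ℕ, Disjoint I1 I2 ∧ I1 ∪ I2 = I \ J ∧
      allLT I1 (J \ I) ∧ allLT (J \ I) I2) ∨
  (∃ J1 J2 : Finset ℕ, Disjoint J1 J2 ∧ J1 ∪ J2 = J \ I ∧
      allLT J1 (I \ J) ∧ allLT (I \ J) J2)

/-- the set `{i_a, i_{a+1}, ..., i_b}` of entries of `I` in (1-indexed) positions `a` to `b`. -/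
def posSlice (I : Finset ℕ) (a b : ℕ) : Finset ℕ :=
  I.filter fun x => a ≤ (I.filter (· ≤ x)).card ∧ (I.filter (· ≤ x)).card ≤ b

/-- the pair of `k`-subsets `I`, `J` is noncrossing. -/
def Noncrossing (k : ℕ) (I J : Finset ℕ) : Prop :=
  ∀ a b : ℕ, 1 ≤ a → a < b → b ≤ k →
    WeaklySeparated (posSlice I a b) (posSlice J a b) ∨
    posSlice I (a + 1) (b - 1) ≠ posSlice J (a + 1) (b - 1)

/-- the `a`-th smallest entry of `I` (1-indexed). -/
def nth (I : Finset ℕ) (a : ℕ) : ℕ := (I.sort (· ≤ ·)).getD (a - 1) 0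

/-- `T` is a rectangular semistandard Young tableau with entries in `[n]`. -/
def IsSSYT {k m : ℕ} (n : ℕ) (T : Fin k → Fin m → ℕ) : Prop :=
  (∀ i j, T i j ∈ Finset.Icc 1 n) ∧
  (∀ i (j j' : Fin m), j ≤ j' → T i j ≤ T i j') ∧
  (∀ (i i' : Fin k) j, i < i' → T i j < T i' j)

section Separation

variable {I J X Y X' Y' : Finset ℕ}

def LiesOutside (X Y : Finset ℕ) : Prop := ∀ x ∈ X, (∀ y ∈ Y, x < y) ∨ (∀ y ∈ Y, y < x)

lemma LiesOutside.mono (h : LiesOutside X Y) (hX : X' ⊆ X) (hY : Y' ⊆ Y) :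
    LiesOutside X' Y' := fun x hx =>
  (h x (hX hx)).imp (fun h y hy => h y (hY hy)) (fun h y hy => h y (hY hy))

lemma LiesOutside.not_between (h : LiesOutside X Y) {x y₁ y₂ : ℕ} (hx : x ∈ X) (hy₁ : y₁ ∈ Y)
    (hy₂ : y₂ ∈ Y) : ¬ (y₁ < x ∧ x < y₂) := by
  rintro ⟨h₁, h₂⟩
  rcases h x hx with h | h
  · exact lt_asymm h₁ (h y₁ hy₁)
  · exact lt_asymm h₂ (h y₂ hy₂)

lemma weaklySeparated_iff :
    WeaklySeparated I J ↔ LiesOutside (I \ J) (J \ I) ∨ LiesOutside (J \ I) (I \ J) := by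
  have key : ∀ X Y : Finset ℕ, (∃ X₁ X₂ : Finset ℕ, Disjoint X₁ X₂ ∧ X₁ ∪ X₂ = X ∧
      allLT X₁ Y ∧ allLT Y X₂) ↔ LiesOutside X Y := by
    intro X Y
    constructor
    · rintro ⟨X₁, X₂, -, rfl, h₁, h₂⟩ x hx
      rcases mem_union.1 hx with hx | hx
      · exact Or.inl fun y hy => h₁ x hx y hy
      · exact Or.inr fun y hy => h₂ y hy x hx
    · intro h
      refine ⟨{x ∈ X | ∀ y ∈ Y, x < y}, {x ∈ X | ¬ ∀ y ∈ Y, x < y},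
        disjoint_filter_filter_not _ _ _, filter_union_filter_not_eq _ _,
        fun x hx => (mem_filter.1 hx).2, fun y hy x hx => ?_⟩
      obtain ⟨hxX, hx⟩ := mem_filter.1 hx
      exact (h x hxX).resolve_left hx y hy
  exact or_congr (key _ _) (key _ _)

lemma WeaklySeparated.symm (h : WeaklySeparated I J) : WeaklySeparated J I := Or.symm h

lemma WeaklySeparated.false_of_alternating (h : WeaklySeparated I J) {a b c d : ℕ}
    (ha : a ∈ I \ J) (hb : b ∈ J \ I) (hc : c ∈ I \ J) (hd : d ∈ J \ I)
    (hab : a < b) (hbc : b < c) (hcd : c < d) : False := by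
  rcases weaklySeparated_iff.1 h with h | h
  · exact h.not_between hc hb hd ⟨hbc, hcd⟩
  · exact h.not_between hb ha hc ⟨hab, hbc⟩

lemma Noncrossing.symm {k : ℕ} (h : Noncrossing k I J) : Noncrossing k J I :=
  fun a b ha hab hbk => (h a b ha hab hbk).imp WeaklySeparated.symm Ne.symm

end Separation

section Nth

variable {I : Finset ℕ} {a b x : ℕ}

lemma nth_eq_getElem (ha : 1 ≤ a) (haI : a ≤ I.card) :
    nth I a = (I.sort (· ≤ ·))[a - 1]'(by rw [length_sort]; omega) :=
  List.getD_eq_getElem _ _ _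

lemma nth_mem (ha : 1 ≤ a) (haI : a ≤ I.card) : nth I a ∈ I := by
  rw [nth_eq_getElem ha haI]
  exact (mem_sort _).1 (List.getElem_mem _)

lemma nth_lt_nth (ha : 1 ≤ a) (hab : a < b) (hbI : b ≤ I.card) : nth I a < nth I b := by
  rw [nth_eq_getElem ha (by omega), nth_eq_getElem (by omega) hbI]
  exact I.sortedLT_sort.strictMono_get (a := ⟨a - 1, by rw [length_sort]; omega⟩)
    (b := ⟨b - 1, by rw [length_sort]; omega⟩) (Fin.mk_lt_mk.2 (by omega))

lemma nth_le_nth (ha : 1 ≤ a) (hab : a ≤ b) (hbI : b ≤ I.card) : nth I a ≤ nth I b := by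
  rcases hab.eq_or_lt with rfl | hab
  · rfl
  · exact (nth_lt_nth ha hab hbI).le

lemma nth_inj (ha : 1 ≤ a) (haI : a ≤ I.card) (hb : 1 ≤ b) (hbI : b ≤ I.card)
    (h : nth I a = nth I b) : a = b := by
  rcases lt_trichotomy a b with hab | rfl | hab
  · exact absurd h (nth_lt_nth ha hab hbI).ne
  · rfl
  · exact absurd h (nth_lt_nth hb hab haI).ne'

lemma exists_nth_eq (hx : x ∈ I) : ∃ a, 1 ≤ a ∧ a ≤ I.card ∧ nth I a = x := by
  obtain ⟨i, hi, rfl⟩ := List.getElem_of_mem ((mem_sort (· ≤ ·)).2 hx)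
  rw [length_sort] at hi
  exact ⟨i + 1, by omega, by omega, nth_eq_getElem (by omega) (by omega)⟩

lemma card_filter_le_nth (ha : 1 ≤ a) (haI : a ≤ I.card) : #{y ∈ I | y ≤ nth I a} = a := by
  have himage : {y ∈ I | y ≤ nth I a} = (Icc 1 a).image (nth I) := by
    ext y
    simp only [mem_filter, mem_image, mem_Icc]
    constructor
    · rintro ⟨hy, hya⟩
      obtain ⟨b, hb, hbI, rfl⟩ := exists_nth_eq hy
      refine ⟨b, ⟨hb, ?_⟩, rfl⟩
      by_contra! hab
      exact (nth_lt_nth ha hab hbI).not_ge hya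
    · rintro ⟨b, ⟨hb, hba⟩, rfl⟩
      exact ⟨nth_mem hb (hba.trans haI), nth_le_nth hb hba haI⟩
  rw [himage, card_image_of_injOn, Nat.card_Icc, Nat.add_sub_cancel]
  intro b hb c hc h
  simp only [coe_Icc, Set.mem_Icc] at hb hc
  exact nth_inj hb.1 (hb.2.trans haI) hc.1 (hc.2.trans haI) h

lemma mem_posSlice {p q : ℕ} :
    x ∈ posSlice I p q ↔ ∃ a, 1 ≤ a ∧ a ≤ I.card ∧ p ≤ a ∧ a ≤ q ∧ nth I a = x := by
  simp only [posSlice, mem_filter]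
  constructor
  · rintro ⟨hx, hp, hq⟩
    obtain ⟨a, ha, haI, rfl⟩ := exists_nth_eq hx
    rw [card_filter_le_nth ha haI] at hp hq
    exact ⟨a, ha, haI, hp, hq, rfl⟩
  · rintro ⟨a, ha, haI, hp, hq, rfl⟩
    rw [card_filter_le_nth ha haI]
    exact ⟨nth_mem ha haI, hp, hq⟩

end Nth

section Blocks

variable (T1 T2 : Finset ℕ) (k : ℕ)

def rowMin (r : ℕ) : ℕ := min (nth T1 r) (nth T2 r)

def rowMax (r : ℕ) : ℕ := max (nth T1 r) (nth T2 r)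

/-- The index of the block containing the value `z`, blocks being separated by the cuts `e` at
which row `e` lies entirely below row `e + 1`. -/
def blockOf (z : ℕ) : ℕ :=
  #{e ∈ Ico 1 k | rowMax T1 T2 e < rowMin T1 T2 (e + 1) ∧ rowMax T1 T2 e < z}

variable {T1 T2 k}

lemma rowMin_comm : rowMin T2 T1 = rowMin T1 T2 := funext fun _ => min_comm _ _

lemma rowMax_comm : rowMax T2 T1 = rowMax T1 T2 := funext fun _ => max_comm _ _

lemma blockOf_comm : blockOf T2 T1 k = blockOf T1 T2 k := by
  funext z
  simp only [blockOf, rowMin_comm, rowMax_comm]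

lemma blockOf_mono : Monotone (blockOf T1 T2 k) := fun _ _ h =>
  card_le_card (monotone_filter_right _ fun _ _ he => ⟨he.1, he.2.trans_le h⟩)

lemma rowMin_le_rowMin (hT1 : T1.card = k) (hT2 : T2.card = k) {a b : ℕ} (ha : 1 ≤ a)
    (hab : a ≤ b) (hbk : b ≤ k) : rowMin T1 T2 a ≤ rowMin T1 T2 b :=
  min_le_min (nth_le_nth ha hab (by omega)) (nth_le_nth ha hab (by omega))

lemma rowMax_le_rowMax (hT1 : T1.card = k) (hT2 : T2.card = k) {a b : ℕ} (ha : 1 ≤ a)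
    (hab : a ≤ b) (hbk : b ≤ k) : rowMax T1 T2 a ≤ rowMax T1 T2 b :=
  max_le_max (nth_le_nth ha hab (by omega)) (nth_le_nth ha hab (by omega))

lemma blockOf_eq_of_mem_row (hT1 : T1.card = k) (hT2 : T2.card = k) {r z : ℕ} (hr : 1 ≤ r)
    (hrk : r ≤ k) (hz : rowMin T1 T2 r ≤ z) (hz' : z ≤ rowMax T1 T2 r) :
    blockOf T1 T2 k z = blockOf T1 T2 k (rowMin T1 T2 r) := by
  unfold blockOf
  congr 1
  refine filter_congr fun e he => ?_
  rw [mem_Ico] at he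
  rcases lt_or_ge e r with her | hre
  · have := rowMin_le_rowMin hT1 hT2 (by omega) (show e + 1 ≤ r from her) hrk
    constructor <;> rintro ⟨hgap, -⟩ <;> exact ⟨hgap, by omega⟩
  · have := rowMax_le_rowMax hT1 hT2 hr hre he.2.le
    have : rowMin T1 T2 r ≤ rowMax T1 T2 r := min_le_max
    constructor <;> rintro ⟨-, h⟩ <;> omega

lemma blockOf_nth_left (hT1 : T1.card = k) (hT2 : T2.card = k) {r : ℕ} (hr : 1 ≤ r)
    (hrk : r ≤ k) : blockOf T1 T2 k (nth T1 r) = blockOf T1 T2 k (rowMin T1 T2 r) :=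
  blockOf_eq_of_mem_row hT1 hT2 hr hrk (min_le_left _ _) (le_max_left _ _)

lemma blockOf_nth_right (hT1 : T1.card = k) (hT2 : T2.card = k) {r : ℕ} (hr : 1 ≤ r)
    (hrk : r ≤ k) : blockOf T1 T2 k (nth T2 r) = blockOf T1 T2 k (rowMin T1 T2 r) :=
  blockOf_eq_of_mem_row hT1 hT2 hr hrk (min_le_right _ _) (le_max_right _ _)

lemma blockOf_lt_of_gap {e : ℕ} (he : 1 ≤ e) (hek : e < k)
    (hgap : rowMax T1 T2 e < rowMin T1 T2 (e + 1)) :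
    blockOf T1 T2 k (rowMax T1 T2 e) < blockOf T1 T2 k (rowMin T1 T2 (e + 1)) := by
  refine card_lt_card ((ssubset_iff_of_subset
    (monotone_filter_right _ fun _ _ hx => ⟨hx.1, hx.2.trans hgap⟩)).2 ⟨e, ?_, ?_⟩)
  · simp [he, hek, hgap]
  · simp

lemma exists_sdiff_of_nth_lt (hT1 : T1.card = k) (hT2 : T2.card = k) {r : ℕ} (hr : 1 ≤ r)
    (hrk : r ≤ k) (hlt : nth T1 r < nth T2 r) :
    ∃ e, 1 ≤ e ∧ e ≤ r ∧ nth T1 e ∉ T2 ∧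
      blockOf T1 T2 k (rowMin T1 T2 e) = blockOf T1 T2 k (rowMin T1 T2 r) := by
  induction r using Nat.strong_induction_on with
  | _ r ih =>
  by_cases hmem : nth T1 r ∈ T2
  · -- `nth T1 r` is an entry of `T2` in an earlier row of the same block
    obtain ⟨e, he, heT2, hev⟩ := exists_nth_eq hmem
    have her : e < r := by
      by_contra! h
      have := nth_le_nth hr h heT2
      omega
    have hlt' : nth T1 e < nth T2 e := hev ▸ nth_lt_nth he her (by omega)
    have hblk : blockOf T1 T2 k (rowMin T1 T2 e) = blockOf T1 T2 k (rowMin T1 T2 r) := by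
      rw [← blockOf_nth_right hT1 hT2 he (by omega), hev, blockOf_nth_left hT1 hT2 hr hrk]
    obtain ⟨e', he', he'e, hmem', hblk'⟩ := ih e her he (by omega) hlt'
    exact ⟨e', he', he'e.trans her.le, hmem', hblk'.trans hblk⟩
  · exact ⟨r, hr, le_rfl, hmem, rfl⟩

lemma exists_sdiff_of_nth_gt (hT1 : T1.card = k) (hT2 : T2.card = k) {r : ℕ} (hr : 1 ≤ r)
    (hrk : r ≤ k) (hgt : nth T2 r < nth T1 r) :
    ∃ e, r ≤ e ∧ e ≤ k ∧ nth T1 e ∉ T2 ∧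
      blockOf T1 T2 k (rowMin T1 T2 e) = blockOf T1 T2 k (rowMin T1 T2 r) := by
  induction hd : k - r using Nat.strong_induction_on generalizing r with
  | _ d ih =>
  by_cases hmem : nth T1 r ∈ T2
  · obtain ⟨e, he, heT2, hev⟩ := exists_nth_eq hmem
    have hre : r < e := by
      by_contra! h
      have := nth_le_nth he h (by omega : r ≤ T2.card)
      omega
    have hgt' : nth T2 e < nth T1 e := hev ▸ nth_lt_nth hr hre (by omega)
    have hblk : blockOf T1 T2 k (rowMin T1 T2 e) = blockOf T1 T2 k (rowMin T1 T2 r) := by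
      rw [← blockOf_nth_right hT1 hT2 he (by omega), hev, blockOf_nth_left hT1 hT2 hr hrk]
    obtain ⟨e', hee', he'k, hmem', hblk'⟩ :=
      ih (k - e) (by omega) (by omega) (by omega) hgt' rfl
    exact ⟨e', hre.le.trans hee', he'k, hmem', hblk'.trans hblk⟩
  · exact ⟨r, le_rfl, hrk, hmem, rfl⟩

lemma exists_mem_sdiff_blockOf_eq_rowMin (hT1 : T1.card = k) (hT2 : T2.card = k) {r : ℕ}
    (hr : 1 ≤ r) (hrk : r ≤ k) (hnt : nth T1 r ≠ nth T2 r) :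
    ∃ a ∈ T1 \ T2, blockOf T1 T2 k a = blockOf T1 T2 k (rowMin T1 T2 r) := by
  obtain ⟨e, he, hek, hmem, hblk⟩ : ∃ e, 1 ≤ e ∧ e ≤ k ∧ nth T1 e ∉ T2 ∧
      blockOf T1 T2 k (rowMin T1 T2 e) = blockOf T1 T2 k (rowMin T1 T2 r) := by
    rcases hnt.lt_or_gt with h | h
    · obtain ⟨e, he, her, hmem, hblk⟩ := exists_sdiff_of_nth_lt hT1 hT2 hr hrk h
      exact ⟨e, he, her.trans hrk, hmem, hblk⟩
    · obtain ⟨e, hre, hek, hmem, hblk⟩ := exists_sdiff_of_nth_gt hT1 hT2 hr hrk h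
      exact ⟨e, hr.trans hre, hek, hmem, hblk⟩
  exact ⟨nth T1 e, mem_sdiff.2 ⟨nth_mem he (by omega), hmem⟩,
    (blockOf_nth_left hT1 hT2 he hek).trans hblk⟩

lemma exists_row_of_mem_sdiff (hT1 : T1.card = k) (hT2 : T2.card = k) {a : ℕ}
    (ha : a ∈ T1 \ T2) : ∃ r, 1 ≤ r ∧ r ≤ k ∧ nth T1 r = a ∧ nth T1 r ≠ nth T2 r := by
  obtain ⟨haT1, haT2⟩ := mem_sdiff.1 ha
  obtain ⟨r, hr, hrk, rfl⟩ := exists_nth_eq haT1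
  exact ⟨r, hr, by omega, rfl, fun h => haT2 (h ▸ nth_mem hr (by omega))⟩

lemma exists_mem_sdiffs_blockOf_eq (hT1 : T1.card = k) (hT2 : T2.card = k) {z : ℕ}
    (hz : z ∈ T1 \ T2 ∪ T2 \ T1) :
    (∃ a ∈ T1 \ T2, blockOf T1 T2 k a = blockOf T1 T2 k z) ∧
      ∃ b ∈ T2 \ T1, blockOf T1 T2 k b = blockOf T1 T2 k z := by
  obtain ⟨r, hr, hrk, hnt, hzr⟩ : ∃ r, 1 ≤ r ∧ r ≤ k ∧ nth T1 r ≠ nth T2 r ∧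
      blockOf T1 T2 k z = blockOf T1 T2 k (rowMin T1 T2 r) := by
    rcases mem_union.1 hz with hz | hz
    · obtain ⟨r, hr, hrk, rfl, hnt⟩ := exists_row_of_mem_sdiff hT1 hT2 hz
      exact ⟨r, hr, hrk, hnt, blockOf_nth_left hT1 hT2 hr hrk⟩
    · obtain ⟨r, hr, hrk, rfl, hnt⟩ := exists_row_of_mem_sdiff hT2 hT1 hz
      exact ⟨r, hr, hrk, hnt.symm, blockOf_nth_right hT1 hT2 hr hrk⟩
  obtain ⟨a, ha, hab⟩ := exists_mem_sdiff_blockOf_eq_rowMin hT1 hT2 hr hrk hnt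
  obtain ⟨b, hb, hbb⟩ := exists_mem_sdiff_blockOf_eq_rowMin hT2 hT1 hr hrk hnt.symm
  rw [blockOf_comm, rowMin_comm] at hbb
  exact ⟨⟨a, ha, hab.trans hzr.symm⟩, b, hb, hbb.trans hzr.symm⟩

end Blocks

lemma pair_eq_pair_iff {a b c d : ℕ} :
    ({a, b} : Multiset ℕ) = {c, d} ↔ (a = c ∧ b = d) ∨ (a = d ∧ b = c) := by
  simp only [Multiset.insert_eq_cons, Multiset.cons_eq_cons, Multiset.singleton_eq_cons_iff,
    Multiset.singleton_inj, exists_eq_right_right, and_true]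
  omega

def SameRows (k : ℕ) (S1 S2 T1 T2 : Finset ℕ) : Prop :=
  ∀ a, 1 ≤ a → a ≤ k → ({nth S1 a, nth S2 a} : Multiset ℕ) = {nth T1 a, nth T2 a}

section SameRows

variable {k : ℕ} {S1 S2 T1 T2 : Finset ℕ}

lemma SameRows.eq_or_eq (h : SameRows k S1 S2 T1 T2) {c : ℕ} (hc : 1 ≤ c) (hck : c ≤ k) :
    (nth S1 c = nth T1 c ∧ nth S2 c = nth T2 c) ∨ (nth S1 c = nth T2 c ∧ nth S2 c = nth T1 c) :=
  pair_eq_pair_iff.1 (h c hc hck)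

lemma SameRows.swap_left (h : SameRows k S1 S2 T1 T2) : SameRows k S2 S1 T1 T2 :=
  fun c hc hck => (Multiset.pair_comm _ _).trans (h c hc hck)

lemma SameRows.swap_right (h : SameRows k S1 S2 T1 T2) : SameRows k S1 S2 T2 T1 :=
  fun c hc hck => (h c hc hck).trans (Multiset.pair_comm _ _)

-- Within a block, `rowMin (e + 1) ≤ rowMax e`, so an increasing choice that has reached the row
-- maximum can never drop back to the row minimum.
lemma nth_eq_rowMax_of_blockOf_eq (hT1 : T1.card = k) (hT2 : T2.card = k) {W : Finset ℕ}
    (hW : W.card = k) (hWrow : ∀ c, 1 ≤ c → c ≤ k → nth W c = nth T1 c ∨ nth W c = nth T2 c)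
    {r r' : ℕ} (hr : 1 ≤ r) (hrr' : r ≤ r') (hr'k : r' ≤ k)
    (hblk : blockOf T1 T2 k (rowMin T1 T2 r) = blockOf T1 T2 k (rowMin T1 T2 r'))
    (hWr : nth W r = rowMax T1 T2 r) : nth W r' = rowMax T1 T2 r' := by
  induction r', hrr' using Nat.le_induction with
  | base => exact hWr
  | succ e hre ih =>
    have h₁ := blockOf_mono (T1 := T1) (T2 := T2) (k := k)
      (rowMin_le_rowMin hT1 hT2 hr hre (by omega))
    have h₂ := blockOf_mono (T1 := T1) (T2 := T2) (k := k)
      (rowMin_le_rowMin hT1 hT2 (by omega) (by omega : e ≤ e + 1) hr'k)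
    have hWe := ih (by omega) (by omega)
    have hlinked : rowMin T1 T2 (e + 1) ≤ rowMax T1 T2 e := by
      by_contra! hgap
      have := blockOf_lt_of_gap (k := k) (by omega) (by omega) hgap
      rw [blockOf_eq_of_mem_row hT1 hT2 (r := e) (z := rowMax T1 T2 e) (by omega) (by omega)
        min_le_max le_rfl] at this
      omega
    have hlt : nth W e < nth W (e + 1) := nth_lt_nth (by omega) (by omega) (by omega)
    unfold rowMin at hlinked
    unfold rowMax at hlinked hWe ⊢
    rcases hWrow (e + 1) (by omega) hr'k with h | h <;> omega

lemma SameRows.nth_eq_rowMax_iff (h : SameRows k S1 S2 T1 T2) (hS1 : S1.card = k)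
    (hS2 : S2.card = k) (hT1 : T1.card = k) (hT2 : T2.card = k) {r r' : ℕ} (hr : 1 ≤ r)
    (hrr' : r ≤ r') (hr'k : r' ≤ k) (hnt : nth T1 r' ≠ nth T2 r')
    (hblk : blockOf T1 T2 k (rowMin T1 T2 r) = blockOf T1 T2 k (rowMin T1 T2 r')) :
    nth S1 r = rowMax T1 T2 r ↔ nth S1 r' = rowMax T1 T2 r' := by
  have hrow₁ : ∀ c, 1 ≤ c → c ≤ k → nth S1 c = nth T1 c ∨ nth S1 c = nth T2 c :=
    fun c hc hck => (h.eq_or_eq hc hck).imp And.left And.left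
  have hrow₂ : ∀ c, 1 ≤ c → c ≤ k → nth S2 c = nth T1 c ∨ nth S2 c = nth T2 c :=
    fun c hc hck => ((h.eq_or_eq hc hck).imp And.right And.right).symm
  refine ⟨nth_eq_rowMax_of_blockOf_eq hT1 hT2 hS1 hrow₁ hr hrr' hr'k hblk, fun hS1r' => ?_⟩
  by_contra hS1r
  have hS2r : nth S2 r = rowMax T1 T2 r := by
    unfold rowMax at hS1r ⊢
    rcases h.eq_or_eq hr (by omega) with ⟨h₁, h₂⟩ | ⟨h₁, h₂⟩ <;> omega
  have hS2r' := nth_eq_rowMax_of_blockOf_eq hT1 hT2 hS2 hrow₂ hr hrr' hr'k hblk hS2r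
  unfold rowMax at hS1r' hS2r'
  rcases h.eq_or_eq (by omega) hr'k with ⟨h₁, h₂⟩ | ⟨h₁, h₂⟩ <;> omega

lemma SameRows.nth_eq_iff (h : SameRows k S1 S2 T1 T2) (hS1 : S1.card = k) (hS2 : S2.card = k)
    (hT1 : T1.card = k) (hT2 : T2.card = k) {r r' : ℕ} (hr : 1 ≤ r) (hrk : r ≤ k) (hr' : 1 ≤ r')
    (hr'k : r' ≤ k) (hnt : nth T1 r ≠ nth T2 r) (hnt' : nth T1 r' ≠ nth T2 r')
    (hblk : blockOf T1 T2 k (rowMin T1 T2 r) = blockOf T1 T2 k (rowMin T1 T2 r')) :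
    nth S1 r = nth T1 r ↔ nth S1 r' = nth T1 r' := by
  wlog hrr' : r ≤ r' generalizing r r'
  · exact (this hr' hr'k hr hrk hnt' hnt hblk.symm (le_of_not_ge hrr')).symm
  have hself : SameRows k T1 T2 T1 T2 := fun _ _ _ => rfl
  have key : ∀ c, 1 ≤ c → c ≤ k → nth T1 c ≠ nth T2 c → (nth S1 c = nth T1 c ↔
      (nth S1 c = rowMax T1 T2 c ↔ nth T1 c = rowMax T1 T2 c)) := by
    intro c hc hck hntc
    unfold rowMax
    rcases h.eq_or_eq hc hck with ⟨h₁, -⟩ | ⟨h₁, -⟩ <;> omega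
  rw [key r hr hrk hnt, key r' hr' hr'k hnt', h.nth_eq_rowMax_iff hS1 hS2 hT1 hT2 hr hrr' hr'k hnt'
    hblk, hself.nth_eq_rowMax_iff hT1 hT2 hT1 hT2 hr hrr' hr'k hnt' hblk]

lemma nth_eq_of_mem {S : Finset ℕ} (hS : S.card = k) (hT1 : T1.card = k) (hT2 : T2.card = k)
    (hrow : ∀ c, 1 ≤ c → c ≤ k → nth S c = nth T1 c ∨ nth S c = nth T2 c) {r z : ℕ}
    (hr : 1 ≤ r) (hrk : r ≤ k) (hzr : nth T1 r = z) (hzT2 : z ∉ T2) (hzS : z ∈ S) :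
    nth S r = z := by
  obtain ⟨e, he, heS, rfl⟩ := exists_nth_eq hzS
  rcases hrow e he (by omega) with h | h
  · rw [nth_inj hr (by omega) he (by omega) (hzr.trans h)]
  · exact absurd (h ▸ nth_mem he (by omega)) hzT2

lemma SameRows.mem_sdiff_iff (h : SameRows k S1 S2 T1 T2) (hS1 : S1.card = k)
    (hS2 : S2.card = k) (hT1 : T1.card = k) (hT2 : T2.card = k) {r z : ℕ} (hr : 1 ≤ r)
    (hrk : r ≤ k) (hzr : nth T1 r = z) (hzT2 : z ∉ T2) : z ∈ S1 \ S2 ↔ nth S1 r = z := by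
  have hrow₁ : ∀ c, 1 ≤ c → c ≤ k → nth S1 c = nth T1 c ∨ nth S1 c = nth T2 c :=
    fun c hc hck => (h.eq_or_eq hc hck).imp And.left And.left
  have hrow₂ : ∀ c, 1 ≤ c → c ≤ k → nth S2 c = nth T1 c ∨ nth S2 c = nth T2 c :=
    fun c hc hck => ((h.eq_or_eq hc hck).imp And.right And.right).symm
  have hnt : nth T1 r ≠ nth T2 r := fun heq => hzT2 (hzr ▸ heq ▸ nth_mem hr (by omega))
  refine ⟨fun hz => nth_eq_of_mem hS1 hT1 hT2 hrow₁ hr hrk hzr hzT2 (mem_sdiff.1 hz).1,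
    fun hs => mem_sdiff.2 ⟨hs ▸ nth_mem hr (by omega), fun hzS2 => ?_⟩⟩
  have := nth_eq_of_mem hS2 hT1 hT2 hrow₂ hr hrk hzr hzT2 hzS2
  rcases h.eq_or_eq hr hrk with ⟨h₁, h₂⟩ | ⟨h₁, h₂⟩ <;> omega

/-- Block `β` is flipped if on some (by `SameRows.nth_eq_iff`, on every) row of `β` where `T1` and
`T2` differ, `S1` takes the entry of `T2`. -/
def Flipped (k : ℕ) (S1 T1 T2 : Finset ℕ) (β : ℕ) : Prop :=
  ∃ r, 1 ≤ r ∧ r ≤ k ∧ nth T1 r ≠ nth T2 r ∧ blockOf T1 T2 k (rowMin T1 T2 r) = β ∧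
    nth S1 r ≠ nth T1 r

lemma SameRows.flipped_iff (h : SameRows k S1 S2 T1 T2) (hS1 : S1.card = k) (hS2 : S2.card = k)
    (hT1 : T1.card = k) (hT2 : T2.card = k) {r : ℕ} (hr : 1 ≤ r) (hrk : r ≤ k)
    (hnt : nth T1 r ≠ nth T2 r) :
    Flipped k S1 T1 T2 (blockOf T1 T2 k (rowMin T1 T2 r)) ↔ nth S1 r ≠ nth T1 r := by
  refine ⟨fun ⟨r', hr', hr'k, hnt', hblk, hne⟩ heq => hne ?_,
    fun hne => ⟨r, hr, hrk, hnt, rfl, hne⟩⟩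
  exact (h.nth_eq_iff hS1 hS2 hT1 hT2 hr hrk hr' hr'k hnt hnt' hblk.symm).1 heq

lemma SameRows.mem_of_mem_left (h : SameRows k S1 S2 T1 T2) (hS1 : S1.card = k)
    (hS2 : S2.card = k) (hT1 : T1.card = k) (hT2 : T2.card = k) {a : ℕ} (ha : a ∈ T1 \ T2) :
    (Flipped k S1 T1 T2 (blockOf T1 T2 k a) → a ∈ S2 \ S1) ∧
      (¬ Flipped k S1 T1 T2 (blockOf T1 T2 k a) → a ∈ S1 \ S2) := by
  obtain ⟨r, hr, hrk, rfl, hnt⟩ := exists_row_of_mem_sdiff hT1 hT2 ha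
  have haT2 := (mem_sdiff.1 ha).2
  rw [blockOf_nth_left hT1 hT2 hr hrk, h.flipped_iff hS1 hS2 hT1 hT2 hr hrk hnt,
    h.swap_left.mem_sdiff_iff hS2 hS1 hT1 hT2 hr hrk rfl haT2,
    h.mem_sdiff_iff hS1 hS2 hT1 hT2 hr hrk rfl haT2]
  rcases h.eq_or_eq hr hrk with ⟨h₁, h₂⟩ | ⟨h₁, h₂⟩ <;> omega

lemma SameRows.mem_of_mem_right (h : SameRows k S1 S2 T1 T2) (hS1 : S1.card = k)
    (hS2 : S2.card = k) (hT1 : T1.card = k) (hT2 : T2.card = k) {b : ℕ} (hb : b ∈ T2 \ T1) :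
    (Flipped k S1 T1 T2 (blockOf T1 T2 k b) → b ∈ S1 \ S2) ∧
      (¬ Flipped k S1 T1 T2 (blockOf T1 T2 k b) → b ∈ S2 \ S1) := by
  obtain ⟨r, hr, hrk, rfl, hnt⟩ := exists_row_of_mem_sdiff hT2 hT1 hb
  have hbT1 := (mem_sdiff.1 hb).2
  rw [blockOf_nth_right hT1 hT2 hr hrk, h.flipped_iff hS1 hS2 hT1 hT2 hr hrk hnt.symm,
    h.swap_right.mem_sdiff_iff hS1 hS2 hT2 hT1 hr hrk rfl hbT1,
    h.swap_left.swap_right.mem_sdiff_iff hS2 hS1 hT2 hT1 hr hrk rfl hbT1]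
  rcases h.eq_or_eq hr hrk with ⟨h₁, h₂⟩ | ⟨h₁, h₂⟩ <;> omega

end SameRows

section TwoBlocks

structure OrderedBlocks (blk : ℕ → ℕ) (A B : Finset ℕ) (β γ : ℕ) : Prop where
  lt : β < γ
  blk_eq : ∀ z ∈ A ∪ B, blk z = β ∨ blk z = γ
  exists_right : ∃ b ∈ B, blk b = β
  exists_left : ∃ a ∈ A, blk a = γ
  lt_of_blk_eq : ∀ a ∈ A, ∀ b ∈ B, blk a = blk b → a < b

variable {blk : ℕ → ℕ} {A B P Q : Finset ℕ} {flipped : ℕ → Prop}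

lemma orderedBlocks_of_flipped (hblk : Monotone blk) (hPQ : LiesOutside P Q)
    (hboth : ∀ z ∈ A ∪ B, (∃ a ∈ A, blk a = blk z) ∧ ∃ b ∈ B, blk b = blk z)
    (hA : ∀ a ∈ A, (flipped (blk a) → a ∈ Q) ∧ (¬ flipped (blk a) → a ∈ P))
    (hB : ∀ b ∈ B, (flipped (blk b) → b ∈ P) ∧ (¬ flipped (blk b) → b ∈ Q))
    {β γ : ℕ} (hβγ : β < γ) (hblk_eq : ∀ z ∈ A ∪ B, blk z = β ∨ blk z = γ)
    (hβ : ∃ z ∈ A ∪ B, blk z = β) (hγ : ∃ z ∈ A ∪ B, blk z = γ)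
    (hfβ : ¬ flipped β) (hfγ : flipped γ) : OrderedBlocks blk A B β γ := by
  obtain ⟨b₀, hb₀, hb₀β⟩ : ∃ b ∈ B, blk b = β := by
    obtain ⟨z, hz, rfl⟩ := hβ
    exact (hboth z hz).2
  obtain ⟨a₀, ha₀, ha₀γ⟩ : ∃ a ∈ A, blk a = γ := by
    obtain ⟨z, hz, rfl⟩ := hγ
    exact (hboth z hz).1
  refine ⟨hβγ, hblk_eq, ⟨b₀, hb₀, hb₀β⟩, ⟨a₀, ha₀, ha₀γ⟩, fun a ha b hb hab => ?_⟩
  rcases hblk_eq a (mem_union_left _ ha) with h | h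
  · -- `a ∈ P` lies below `a₀ ∈ Q`, hence below all of `Q ∋ b`
    have haP := (hA a ha).2 (by rwa [h])
    have hbQ := (hB b hb).2 (by rwa [← hab, h])
    have ha₀Q := (hA a₀ ha₀).1 (by rwa [ha₀γ])
    have : a < a₀ := hblk.reflect_lt (by omega)
    exact (hPQ a haP).resolve_right (fun h' => lt_asymm this (h' a₀ ha₀Q)) b hbQ
  · -- `b ∈ P` lies above `b₀ ∈ Q`, hence above all of `Q ∋ a`
    have hbP := (hB b hb).1 (by rwa [← hab, h])
    have haQ := (hA a ha).1 (by rwa [h])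
    have hb₀Q := (hB b₀ hb₀).2 (by rwa [hb₀β])
    have : b₀ < b := hblk.reflect_lt (by omega)
    exact (hPQ b hbP).resolve_left (fun h' => lt_asymm this (h' b₀ hb₀Q)) a haQ

lemma exists_orderedBlocks (hblk : Monotone blk) (hPQ : LiesOutside P Q)
    (hboth : ∀ z ∈ A ∪ B, (∃ a ∈ A, blk a = blk z) ∧ ∃ b ∈ B, blk b = blk z)
    (hA : ∀ a ∈ A, (flipped (blk a) → a ∈ Q) ∧ (¬ flipped (blk a) → a ∈ P))
    (hB : ∀ b ∈ B, (flipped (blk b) → b ∈ P) ∧ (¬ flipped (blk b) → b ∈ Q))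
    (hAB : ¬ LiesOutside A B) (hBA : ¬ LiesOutside B A) :
    ∃ β γ, OrderedBlocks blk A B β γ ∨ OrderedBlocks blk B A β γ := by
  have hPQ_blk : ∀ z ∈ A ∪ B, (∃ p ∈ P, blk p = blk z) ∧ ∃ q ∈ Q, blk q = blk z := by
    intro z hz
    obtain ⟨⟨a, ha, haz⟩, b, hb, hbz⟩ := hboth z hz
    by_cases hf : flipped (blk z)
    · exact ⟨⟨b, (hB b hb).1 (by rwa [hbz]), hbz⟩, a, (hA a ha).1 (by rwa [haz]), haz⟩
    · exact ⟨⟨a, (hA a ha).2 (by rwa [haz]), haz⟩, b, (hB b hb).2 (by rwa [hbz]), hbz⟩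
  have hD : (A ∪ B).Nonempty := by
    by_contra hD
    rw [not_nonempty_iff_eq_empty, union_eq_empty] at hD
    exact hAB (by simp [LiesOutside, hD.1])
  set zβ := (A ∪ B).min' hD
  set zγ := (A ∪ B).max' hD
  have hzβ : zβ ∈ A ∪ B := min'_mem _ _
  have hzγ : zγ ∈ A ∪ B := max'_mem _ _
  -- a third block would put an element of `P` between two elements of `Q`
  have hblk_eq : ∀ z ∈ A ∪ B, blk z = blk zβ ∨ blk z = blk zγ := by
    intro z hz
    by_contra! hne
    have h₁ : blk zβ < blk z := (hblk (min'_le _ z hz)).lt_of_ne hne.1.symm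
    have h₂ : blk z < blk zγ := (hblk (le_max' _ z hz)).lt_of_ne hne.2
    obtain ⟨p, hp, hpz⟩ := (hPQ_blk z hz).1
    obtain ⟨q₁, hq₁, hq₁β⟩ := (hPQ_blk zβ hzβ).2
    obtain ⟨q₂, hq₂, hq₂γ⟩ := (hPQ_blk zγ hzγ).2
    exact hPQ.not_between hp hq₁ hq₂ ⟨hblk.reflect_lt (by omega), hblk.reflect_lt (by omega)⟩
  have hβγ : blk zβ ≤ blk zγ := hblk (min'_le _ _ hzγ)
  have hBA_union : ∀ {z}, z ∈ B ∪ A ↔ z ∈ A ∪ B := by simp [or_comm]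
  refine ⟨blk zβ, blk zγ, ?_⟩
  by_cases hfβ : flipped (blk zβ) <;> by_cases hfγ : flipped (blk zγ)
  · refine absurd (hPQ.mono (fun b hb => ?_) fun a ha => ?_) hBA
    · rcases hblk_eq b (mem_union_right _ hb) with h | h <;> exact (hB b hb).1 (by rwa [h])
    · rcases hblk_eq a (mem_union_left _ ha) with h | h <;> exact (hA a ha).1 (by rwa [h])
  · refine Or.inr (orderedBlocks_of_flipped (flipped := fun β => ¬ flipped β) hblk hPQ
      (fun z hz => (hboth z (hBA_union.1 hz)).symm)
      (fun b hb => ⟨(hB b hb).2, fun h => (hB b hb).1 (not_not.1 h)⟩)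
      (fun a ha => ⟨(hA a ha).2, fun h => (hA a ha).1 (not_not.1 h)⟩)
      (hβγ.lt_of_ne fun h => hfγ (h ▸ hfβ)) (fun z hz => hblk_eq z (hBA_union.1 hz))
      ⟨zβ, hBA_union.2 hzβ, rfl⟩ ⟨zγ, hBA_union.2 hzγ, rfl⟩ (not_not.2 hfβ) hfγ)
  · exact Or.inl (orderedBlocks_of_flipped hblk hPQ hboth hA hB
      (hβγ.lt_of_ne fun h => hfβ (h ▸ hfγ)) hblk_eq ⟨zβ, hzβ, rfl⟩ ⟨zγ, hzγ, rfl⟩ hfβ hfγ)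
  · refine absurd (hPQ.mono (fun a ha => ?_) fun b hb => ?_) hAB
    · rcases hblk_eq a (mem_union_left _ ha) with h | h <;> exact (hA a ha).2 (by rwa [h])
    · rcases hblk_eq b (mem_union_right _ hb) with h | h <;> exact (hB b hb).2 (by rwa [h])

end TwoBlocks

section Noncrossing

variable {T1 T2 : Finset ℕ} {k : ℕ}

lemma not_noncrossing_of_alternating_rows (hT1 : T1.card = k) (hT2 : T2.card = k) {c c' : ℕ}
    (hc : 1 ≤ c) (hcc' : c < c') (hc'k : c' ≤ k) (hmid : ∀ r, c < r → r < c' → nth T1 r = nth T2 r)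
    (h₁ : nth T1 c < nth T2 c) (h₂ : nth T2 c < nth T1 c') (h₃ : nth T1 c' < nth T2 c') :
    ¬ Noncrossing k T1 T2 := by
  intro hnc
  have hinner : posSlice T1 (c + 1) (c' - 1) = posSlice T2 (c + 1) (c' - 1) := by
    ext x
    simp only [mem_posSlice]
    constructor <;> rintro ⟨r, hr, hrk, hcr, hrc', rfl⟩
    · exact ⟨r, hr, by omega, hcr, hrc', (hmid r (by omega) (by omega)).symm⟩
    · exact ⟨r, hr, by omega, hcr, hrc', hmid r (by omega) (by omega)⟩
  have hws := (hnc c c' hc hcc' hc'k).resolve_right (not_not.2 hinner)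
  have hslice₁ : ∀ x ∈ posSlice T1 c c', x ≠ nth T2 c ∧ x ≠ nth T2 c' := by
    intro x hx
    obtain ⟨r, hr, hrk, hcr, hrc', rfl⟩ := mem_posSlice.1 hx
    rcases (show r = c ∨ (c < r ∧ r < c') ∨ r = c' by omega) with rfl | ⟨h, h'⟩ | rfl
    · omega
    · have := hmid r h h'
      have := nth_lt_nth hc h (by omega : r ≤ T2.card)
      have := nth_lt_nth (by omega) h' (by omega : c' ≤ T1.card)
      omega
    · omega
  have hslice₂ : ∀ x ∈ posSlice T2 c c', x ≠ nth T1 c ∧ x ≠ nth T1 c' := by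
    intro x hx
    obtain ⟨r, hr, hrk, hcr, hrc', rfl⟩ := mem_posSlice.1 hx
    rcases (show r = c ∨ (c < r ∧ r < c') ∨ r = c' by omega) with rfl | ⟨h, h'⟩ | rfl
    · omega
    · have := hmid r h h'
      have := nth_lt_nth hc h (by omega : r ≤ T2.card)
      have := nth_lt_nth (by omega) h' (by omega : c' ≤ T1.card)
      omega
    · omega
  have hmem₁ : ∀ r, c ≤ r → r ≤ c' → nth T1 r ∈ posSlice T1 c c' :=
    fun r h h' => mem_posSlice.2 ⟨r, by omega, by omega, h, h', rfl⟩
  have hmem₂ : ∀ r, c ≤ r → r ≤ c' → nth T2 r ∈ posSlice T2 c c' :=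
    fun r h h' => mem_posSlice.2 ⟨r, by omega, by omega, h, h', rfl⟩
  exact hws.false_of_alternating
    (mem_sdiff.2 ⟨hmem₁ c le_rfl hcc'.le, fun h => (hslice₂ _ h).1 rfl⟩)
    (mem_sdiff.2 ⟨hmem₂ c le_rfl hcc'.le, fun h => (hslice₁ _ h).1 rfl⟩)
    (mem_sdiff.2 ⟨hmem₁ c' hcc'.le le_rfl, fun h => (hslice₂ _ h).2 rfl⟩)
    (mem_sdiff.2 ⟨hmem₂ c' hcc'.le le_rfl, fun h => (hslice₁ _ h).2 rfl⟩) h₁ h₂ h₃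

lemma nth_lt_nth_of_last_in_block (hT1 : T1.card = k) (hT2 : T2.card = k) {β c : ℕ}
    (horder : ∀ a ∈ T1 \ T2, ∀ b ∈ T2 \ T1, blockOf T1 T2 k a = blockOf T1 T2 k b → a < b)
    (hb : ∃ b ∈ T2 \ T1, blockOf T1 T2 k b = β) (hc : 1 ≤ c) (hck : c ≤ k)
    (hnt : nth T1 c ≠ nth T2 c) (hcβ : blockOf T1 T2 k (rowMin T1 T2 c) = β)
    (hlast : ∀ r, 1 ≤ r → r ≤ k → nth T1 r ≠ nth T2 r → blockOf T1 T2 k (rowMin T1 T2 r) = β →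
      r ≤ c) :
    nth T1 c < nth T2 c := by
  refine hnt.lt_or_gt.resolve_right fun hgt => ?_
  obtain ⟨e, hce, hek, heT2, heβ⟩ := exists_sdiff_of_nth_gt hT1 hT2 hc hck hgt
  obtain rfl : e = c := le_antisymm (hlast e (by omega) hek
    (fun h => heT2 (h ▸ nth_mem (by omega) (by omega))) (heβ.trans hcβ)) hce
  obtain ⟨b, hb, hbβ⟩ := hb
  obtain ⟨r, hr, hrk, rfl, hntr⟩ := exists_row_of_mem_sdiff hT2 hT1 hb
  have hre : r ≤ e := hlast r hr hrk hntr.symm ((blockOf_nth_right hT1 hT2 hr hrk).symm.trans hbβ)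
  have := horder _ (mem_sdiff.2 ⟨nth_mem hc (by omega), heT2⟩) _ hb
    (by rw [blockOf_nth_left hT1 hT2 hc hck, hcβ, hbβ])
  have := nth_le_nth hr hre (by omega : e ≤ T2.card)
  omega

lemma nth_lt_nth_of_first_in_block (hT1 : T1.card = k) (hT2 : T2.card = k) {γ c : ℕ}
    (horder : ∀ a ∈ T1 \ T2, ∀ b ∈ T2 \ T1, blockOf T1 T2 k a = blockOf T1 T2 k b → a < b)
    (ha : ∃ a ∈ T1 \ T2, blockOf T1 T2 k a = γ) (hc : 1 ≤ c) (hck : c ≤ k)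
    (hnt : nth T1 c ≠ nth T2 c) (hcγ : blockOf T1 T2 k (rowMin T1 T2 c) = γ)
    (hfirst : ∀ r, 1 ≤ r → r ≤ k → nth T1 r ≠ nth T2 r → blockOf T1 T2 k (rowMin T1 T2 r) = γ →
      c ≤ r) :
    nth T1 c < nth T2 c := by
  refine hnt.lt_or_gt.resolve_right fun hgt => ?_
  obtain ⟨e, he, hec, heT1, heγ⟩ := exists_sdiff_of_nth_lt hT2 hT1 hc hck hgt
  rw [blockOf_comm, rowMin_comm] at heγ
  obtain rfl : e = c := le_antisymm hec (hfirst e he (by omega)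
    (fun h => heT1 (h.symm ▸ nth_mem he (by omega))) (heγ.trans hcγ))
  obtain ⟨a, ha, haγ⟩ := ha
  obtain ⟨r, hr, hrk, rfl, hntr⟩ := exists_row_of_mem_sdiff hT1 hT2 ha
  have her : e ≤ r := hfirst r hr hrk hntr ((blockOf_nth_left hT1 hT2 hr hrk).symm.trans haγ)
  have := horder _ ha _ (mem_sdiff.2 ⟨nth_mem hc (by omega), heT1⟩)
    (by rw [blockOf_nth_right hT1 hT2 hc hck, hcγ, haγ])
  have := nth_le_nth hc her (by omega : r ≤ T1.card)
  omega

lemma not_noncrossing_of_orderedBlocks {β γ : ℕ} (hT1 : T1.card = k)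
    (hT2 : T2.card = k) (h : OrderedBlocks (blockOf T1 T2 k) (T1 \ T2) (T2 \ T1) β γ) :
    ¬ Noncrossing k T1 T2 := by
  classical
  set InBlock : ℕ → ℕ → Prop := fun δ r =>
    1 ≤ r ∧ r ≤ k ∧ nth T1 r ≠ nth T2 r ∧ blockOf T1 T2 k (rowMin T1 T2 r) = δ
  have hrows : ∀ r, 1 ≤ r → r ≤ k → nth T1 r ≠ nth T2 r → InBlock β r ∨ InBlock γ r := by
    intro r hr hrk hnt
    obtain ⟨a, ha, hab⟩ := exists_mem_sdiff_blockOf_eq_rowMin hT1 hT2 hr hrk hnt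
    rcases h.blk_eq a (mem_union_left _ ha) with h' | h'
    exacts [Or.inl ⟨hr, hrk, hnt, hab.symm.trans h'⟩, Or.inr ⟨hr, hrk, hnt, hab.symm.trans h'⟩]
  obtain ⟨b, hb, hbβ⟩ := h.exists_right
  obtain ⟨rb, hrb, hrbk, rfl, hntb⟩ := exists_row_of_mem_sdiff hT2 hT1 hb
  obtain ⟨a, ha, haγ⟩ := h.exists_left
  obtain ⟨ra, hra, hrak, rfl, hnta⟩ := exists_row_of_mem_sdiff hT1 hT2 ha
  have hγ : ∃ r, InBlock γ r :=
    ⟨ra, hra, hrak, hnta, (blockOf_nth_left hT1 hT2 hra hrak).symm.trans haγ⟩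
  set c := Nat.findGreatest (InBlock β) k
  set c' := Nat.find hγ
  have hc : InBlock β c := Nat.findGreatest_spec (m := rb) hrbk
    ⟨hrb, hrbk, hntb.symm, (blockOf_nth_right hT1 hT2 hrb hrbk).symm.trans hbβ⟩
  have hc' : InBlock γ c' := Nat.find_spec hγ
  have hlast : ∀ r, InBlock β r → r ≤ c := fun r hr => Nat.le_findGreatest hr.2.1 hr
  have hfirst : ∀ r, InBlock γ r → c' ≤ r := fun r hr => Nat.find_min' hγ hr
  have hcc' : c < c' := by
    by_contra! h'
    have : blockOf T1 T2 k (rowMin T1 T2 c') ≤ blockOf T1 T2 k (rowMin T1 T2 c) :=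
      blockOf_mono (rowMin_le_rowMin hT1 hT2 hc'.1 h' hc.2.1)
    have := h.lt
    omega
  have hmid : ∀ r, c < r → r < c' → nth T1 r = nth T2 r := by
    intro r hcr hrc'
    by_contra hnt
    rcases hrows r (by omega) (by omega) hnt with hr | hr
    exacts [absurd (hlast r hr) (by omega), absurd (hfirst r hr) (by omega)]
  have h₂ : nth T2 c < nth T1 c' := blockOf_mono.reflect_lt (by
    rw [blockOf_nth_right hT1 hT2 hc.1 hc.2.1, blockOf_nth_left hT1 hT2 hc'.1 hc'.2.1,
      hc.2.2.2, hc'.2.2.2]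
    exact h.lt)
  exact not_noncrossing_of_alternating_rows hT1 hT2 hc.1 hcc' hc'.2.1 hmid
    (nth_lt_nth_of_last_in_block hT1 hT2 h.lt_of_blk_eq ⟨_, hb, hbβ⟩ hc.1 hc.2.1 hc.2.2.1 hc.2.2.2
      fun r hr hrk hnt hrβ => hlast r ⟨hr, hrk, hnt, hrβ⟩) h₂
    (nth_lt_nth_of_first_in_block hT1 hT2 h.lt_of_blk_eq ⟨_, ha, haγ⟩ hc'.1 hc'.2.1 hc'.2.2.1
      hc'.2.2.2 fun r hr hrk hnt hrγ => hfirst r ⟨hr, hrk, hnt, hrγ⟩)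

end Noncrossing

lemma not_liesOutside_of_sameRows {T1 T2 S1 S2 : Finset ℕ} {k : ℕ} (hT1 : T1.card = k)
    (hT2 : T2.card = k) (hS1 : S1.card = k) (hS2 : S2.card = k) (hnc : Noncrossing k T1 T2)
    (hnws : ¬ WeaklySeparated T1 T2) (h : SameRows k S1 S2 T1 T2) :
    ¬ LiesOutside (S1 \ S2) (S2 \ S1) := by
  intro hPQ
  rw [weaklySeparated_iff, not_or] at hnws
  obtain ⟨β, γ, hord | hord⟩ := exists_orderedBlocks (flipped := Flipped k S1 T1 T2) blockOf_mono
    hPQ (fun z hz => exists_mem_sdiffs_blockOf_eq hT1 hT2 hz)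
    (fun a ha => h.mem_of_mem_left hS1 hS2 hT1 hT2 ha)
    (fun b hb => h.mem_of_mem_right hS1 hS2 hT1 hT2 hb) hnws.1 hnws.2
  · exact not_noncrossing_of_orderedBlocks hT1 hT2 hord hnc
  · rw [← blockOf_comm] at hord
    exact not_noncrossing_of_orderedBlocks hT2 hT1 hord hnc.symm

theorem not_weakly_separated_of_same_union_general
    (k : ℕ) (T1 T2 S1 S2 : Finset ℕ)
    (hT1c : T1.card = k) (hT2c : T2.card = k) (hS1c : S1.card = k) (hS2c : S2.card = k)
    (hnc : Noncrossing k T1 T2) (hnws : ¬ WeaklySeparated T1 T2)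
    (hunion : ∀ a : ℕ, 1 ≤ a → a ≤ k →
      ({nth S1 a, nth S2 a} : Multiset ℕ) = ({nth T1 a, nth T2 a} : Multiset ℕ)) :
    ¬ WeaklySeparated S1 S2 := by
  intro hws
  rcases weaklySeparated_iff.1 hws with h | h
  · exact not_liesOutside_of_sameRows hT1c hT2c hS1c hS2c hnc hnws hunion h
  · exact not_liesOutside_of_sameRows hT1c hT2c hS2c hS1c hnc hnws (SameRows.swap_left hunion) h

/-- If `T1, T2` are noncrossing and not weakly separated, then any pair `S1, S2` with the
same row-wise multiset union is not weakly separated. -/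
theorem not_weakly_separated_of_same_union
    (n k : ℕ) (T1 T2 S1 S2 : Finset ℕ)
    (hT1 : T1 ⊆ Finset.Icc 1 n) (hT2 : T2 ⊆ Finset.Icc 1 n)
    (hS1 : S1 ⊆ Finset.Icc 1 n) (hS2 : S2 ⊆ Finset.Icc 1 n)
    (hT1c : T1.card = k) (hT2c : T2.card = k) (hS1c : S1.card = k) (hS2c : S2.card = k)
    (hnc : Noncrossing k T1 T2) (hnws : ¬ WeaklySeparated T1 T2)
    (hunion : ∀ a : ℕ, 1 ≤ a → a ≤ k →
      ({nth S1 a, nth S2 a} : Multiset ℕ) = ({nth T1 a, nth T2 a} : Multiset ℕ)) :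
    ¬ WeaklySeparated S1 S2 :=
  not_weakly_separated_of_same_union_general k T1 T2 S1 S2 hT1c hT2c hS1c hS2c hnc hnws hunion
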